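/- Every cograph G satisfies B(G) = 1 if G has an isolated vertex, and B(G) = 2 otherwise. -/

import Mathlib

open Set

/-- One step of the zero forcing process on the set `W` of white vertices:
a white vertex is removed (colored black) if it is the unique white neighbor
of some black vertex. -/
def zbStep {V : Type*} (G : SimpleGraph V) (W : Set V) : Set V :=
  {w ∈ W | ¬ ∃ b ∉ W, G.Adj b w ∧ ∀ w' ∈ W, G.Adj b w' → w' = w}

/-- `W` is a zero blocking set: the zero forcing process started with white set `W`
never colors all of `W` black. -/
def IsZeroBlocking {V : Type*} (G : SimpleGraph V) (W : Set V) : Prop :=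
  ∀ n : ℕ, ((zbStep G)^[n] W).Nonempty

/-- The zero blocking number `B(G)`. -/
noncomputable def zbNum {V : Type*} (G : SimpleGraph V) : ℕ∞ :=
  ⨅ (W : Set V) (_ : IsZeroBlocking G W), W.encard


/-- The join `G + H` of two graphs on disjoint vertex sets. -/
def graphJoin {α β : Type*} (G : SimpleGraph α) (H : SimpleGraph β) :
    SimpleGraph (α ⊕ β) where
  Adj x y := match x, y with
    | Sum.inl a, Sum.inl b => G.Adj a b
    | Sum.inr a, Sum.inr b => H.Adj a b
    | Sum.inl _, Sum.inr _ => True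
    | Sum.inr _, Sum.inl _ => True
  symm := ⟨by rintro (a | a) (b | b) h <;> simp_all [SimpleGraph.adj_comm]⟩
  loopless := ⟨by rintro (a | a) h <;> simp_all⟩

/-- Cographs: single-vertex graphs, closed under disjoint union, join, and isomorphism. -/
inductive IsCograph : ∀ {V : Type}, SimpleGraph V → Prop
  | single : IsCograph (⊥ : SimpleGraph (Fin 1))
  | union {α β : Type} {G : SimpleGraph α} {H : SimpleGraph β} :
      IsCograph G → IsCograph H → IsCograph (SimpleGraph.sum G H)
  | join {α β : Type} {G : SimpleGraph α} {H : SimpleGraph β} :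
      IsCograph G → IsCograph H → IsCograph (graphJoin G H)
  | iso {α β : Type} {G : SimpleGraph α} {H : SimpleGraph β} :
      (G ≃g H) → IsCograph G → IsCograph H

def HasTwins {V : Type*} (G : SimpleGraph V) : Prop :=
  ∃ u v : V, u ≠ v ∧ ∀ w, w ≠ u → w ≠ v → (G.Adj u w ↔ G.Adj v w)

lemma cograph_aux {V : Type} {G : SimpleGraph V} (h : IsCograph G) :
    Nonempty V ∧ ((∀ a b : V, a = b) ∨ HasTwins G) := by
  induction h with
  | single =>
    exact ⟨⟨0⟩, Or.inl fun a b => Subsingleton.elim a b⟩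
  | @union α β G H _ _ ihG ihH =>
    obtain ⟨⟨a⟩, hg⟩ := ihG
    obtain ⟨⟨b⟩, hh⟩ := ihH
    refine ⟨⟨Sum.inl a⟩, Or.inr ?_⟩
    rcases hg with hg | ⟨u, v, huv, htw⟩
    · rcases hh with hh | ⟨u, v, huv, htw⟩
      · refine ⟨Sum.inl a, Sum.inr b, by simp, ?_⟩
        rintro (c | c) h1 h2
        · exact absurd (congrArg Sum.inl (hg c a)) h1
        · exact absurd (congrArg Sum.inr (hh c b)) h2
      · refine ⟨Sum.inr u, Sum.inr v, by simpa using huv, ?_⟩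
        rintro (c | c) h1 h2
        · simp
        · simpa using htw c (by simpa using h1) (by simpa using h2)
    · refine ⟨Sum.inl u, Sum.inl v, by simpa using huv, ?_⟩
      rintro (c | c) h1 h2
      · simpa using htw c (by simpa using h1) (by simpa using h2)
      · simp
  | @join α β G H _ _ ihG ihH =>
    obtain ⟨⟨a⟩, hg⟩ := ihG
    obtain ⟨⟨b⟩, hh⟩ := ihH
    refine ⟨⟨Sum.inl a⟩, Or.inr ?_⟩
    rcases hg with hg | ⟨u, v, huv, htw⟩
    · rcases hh with hh | ⟨u, v, huv, htw⟩
      · refine ⟨Sum.inl a, Sum.inr b, by simp, ?_⟩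
        rintro (c | c) h1 h2
        · exact absurd (congrArg Sum.inl (hg c a)) h1
        · exact absurd (congrArg Sum.inr (hh c b)) h2
      · refine ⟨Sum.inr u, Sum.inr v, by simpa using huv, ?_⟩
        rintro (c | c) h1 h2
        · simp [graphJoin]
        · have := htw c (by simpa using h1) (by simpa using h2)
          simpa [graphJoin] using this
    · refine ⟨Sum.inl u, Sum.inl v, by simpa using huv, ?_⟩
      rintro (c | c) h1 h2
      · have := htw c (by simpa using h1) (by simpa using h2)
        simpa [graphJoin] using this
      · simp [graphJoin]
  | @iso α β G H e _ ih =>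
    obtain ⟨⟨a⟩, hg⟩ := ih
    refine ⟨⟨e a⟩, ?_⟩
    rcases hg with hg | ⟨u, v, huv, htw⟩
    · exact Or.inl fun x y => by
        have := hg (e.symm x) (e.symm y)
        simpa using congrArg e this
    · refine Or.inr ⟨e u, e v, fun h => huv (e.injective h), ?_⟩
      intro w h1 h2
      have h1' : e.symm w ≠ u := fun h => h1 (by simpa using congrArg e h)
      have h2' : e.symm w ≠ v := fun h => h2 (by simpa using congrArg e h)
      have := htw (e.symm w) h1' h2'
      have eu : H.Adj (e u) w ↔ G.Adj u (e.symm w) := by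
        conv_lhs => rw [← e.apply_symm_apply w]
        exact e.map_adj_iff
      have ev : H.Adj (e v) w ↔ G.Adj v (e.symm w) := by
        conv_lhs => rw [← e.apply_symm_apply w]
        exact e.map_adj_iff
      rw [eu, ev]; exact this

lemma zbStep_subset {V : Type*} (G : SimpleGraph V) (W : Set V) : zbStep G W ⊆ W :=
  fun _ h => h.1

lemma blocking_of_fixed {V : Type*} {G : SimpleGraph V} {W : Set V}
    (hW : W.Nonempty) (h : zbStep G W = W) : IsZeroBlocking G W := by
  intro n
  have : (zbStep G)^[n] W = W := Function.iterate_fixed h n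
  rw [this]; exact hW

theorem zbNum_cograph {V : Type} [Fintype V] (G : SimpleGraph V) (hG : IsCograph G) :
    ((∃ v : V, ∀ u, ¬ G.Adj v u) → zbNum G = 1) ∧
    (¬ (∃ v : V, ∀ u, ¬ G.Adj v u) → zbNum G = 2) := by
  obtain ⟨hne, hor⟩ := cograph_aux hG
  constructor
  · rintro ⟨v, hv⟩
    have hfix : zbStep G {v} = {v} := by
      ext w
      simp only [zbStep, Set.mem_setOf_eq, Set.mem_singleton_iff]
      constructor
      · rintro ⟨h, -⟩; exact h
      · rintro rfl
        refine ⟨rfl, ?_⟩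
        rintro ⟨b, -, hb, -⟩
        exact hv b hb.symm
    have hblock : IsZeroBlocking G {v} := blocking_of_fixed ⟨v, rfl⟩ hfix
    have hle : zbNum G ≤ 1 := by
      have := iInf₂_le (f := fun (W : Set V) (_ : IsZeroBlocking G W) => W.encard) {v} hblock
      simpa [zbNum] using this
    have hge : 1 ≤ zbNum G := by
      refine le_iInf₂ fun W hW => ?_
      rw [Set.one_le_encard_iff_nonempty]
      simpa using hW 0
    exact le_antisymm hle hge
  · intro hiso
    -- no isolated vertex; V is not subsingleton
    have htw : HasTwins G := by
      rcases hor with hsub | htw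
      · exfalso
        obtain ⟨v⟩ := hne
        exact hiso ⟨v, fun u => by rw [hsub u v]; exact G.irrefl⟩
      · exact htw
    obtain ⟨u, v, huv, htw⟩ := htw
    have hfix : zbStep G {u, v} = {u, v} := by
      ext w
      simp only [zbStep, Set.mem_setOf_eq]
      constructor
      · rintro ⟨h, -⟩; exact h
      · intro hw
        refine ⟨hw, ?_⟩
        rintro ⟨b, hb, hadj, huniq⟩
        have hbu : b ≠ u := fun h => hb (by simp [h])
        have hbv : b ≠ v := fun h => hb (by simp [h])
        have hiff : G.Adj u b ↔ G.Adj v b := htw b hbu hbv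
        rcases hw with rfl | rfl
        · have : G.Adj b v := (hiff.mp hadj.symm).symm
          exact huv (huniq v (by simp) this).symm
        · have : G.Adj b u := (hiff.mpr hadj.symm).symm
          exact huv (huniq u (by simp) this)
    have hblock : IsZeroBlocking G {u, v} := blocking_of_fixed ⟨u, by simp⟩ hfix
    have hle : zbNum G ≤ 2 := by
      have := iInf₂_le (f := fun (W : Set V) (_ : IsZeroBlocking G W) => W.encard) {u, v} hblock
      rwa [Set.encard_pair huv] at this
    have hge : 2 ≤ zbNum G := by
      refine le_iInf₂ fun W hW => ?_
      obtain ⟨x, hx⟩ := hW 0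
      by_contra hlt
      push_neg at hlt
      -- then W = {x}
      have hWx : W = {x} := by
        have h1 : W.encard ≤ 1 := by
          have h2 : W.encard < 1 + 1 := by rwa [one_add_one_eq_two]
          exact Order.le_of_lt_add_one h2
        have := Set.encard_le_one_iff.mp h1
        ext y; simp only [Set.mem_singleton_iff]
        exact ⟨fun hy => this y x hy hx, fun h => h ▸ hx⟩
      -- x has a neighbor
      have : ∃ y, G.Adj x y := by
        by_contra h
        push_neg at h
        exact hiso ⟨x, h⟩
      obtain ⟨y, hy⟩ := this
      have hstep : zbStep G W = ∅ := by
        rw [hWx]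
        ext w
        simp only [zbStep, Set.mem_setOf_eq, Set.mem_singleton_iff, Set.mem_empty_iff_false,
          iff_false, not_and]
        rintro rfl h
        exact h ⟨y, fun hmem => G.irrefl (hmem ▸ hy), hy.symm, fun w' hw' _ => hw'⟩
      have := hW 1
      rw [Function.iterate_one, hstep] at this
      exact this.ne_empty rfl
    exact le_antisymm hle hge
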